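/- arXiv:1006.5205 — 8 statements merged into one kernel-verified Lean document; each statement's English description precedes it below -/
import Mathlib

section
/- Theorem A**: Let G be an abelian group and φ an endomorphism of G. The following are equivalent: (i) φ admits at least one null string; (ii) there exists a countably infinite family of pairwise disjoint null strings of φ; (iii) sc(φ) ∩ ker_∞(φ) ≠ 0, i.e. the intersection of the surjective core of φ with the hyperkernel of φ is a nonzero subgroup. -/
/-- A string of a self-map `f` is a sequence of pairwise distinct elements
with `f (x (n+1)) = x n` for all `n`. -/
def IsString {G : Type*} (f : G → G) (x : ℕ → G) : Prop :=
  Function.Injective x ∧ ∀ n : ℕ, f (x (n + 1)) = x n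

/-- A null string: a string with nonzero first term which is killed by some
positive iterate. -/
def IsNullString {G : Type*} [AddCommGroup G] (f : G → G) (x : ℕ → G) : Prop :=
  IsString f x ∧ x 0 ≠ 0 ∧ ∃ k : ℕ, 0 < k ∧ f^[k] (x 0) = 0

/-- The surjective core of an endomorphism: the join of all subgroups `H`
with `φ(H) = H`. -/
def surjCore {G : Type*} [AddCommGroup G] (φ : G →+ G) : AddSubgroup G :=
  sSup {H : AddSubgroup G | ⇑φ '' (H : Set G) = (H : Set G)}

/-!
A null string lies in the surjective core: the iterates `φ^[j] (x m)` of its terms span a subgroup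
that `φ` maps onto itself. Conversely, if `sc(φ)` contains a nonzero `x` with `φ^[n] x = 0`, some
iterate `y` of `x` is a nonzero element of `sc(φ) ∩ ker φ`, and since `φ` maps `sc(φ)` onto itself,
`y` starts a backward chain `Y` with `Y 0 = y`. The strings `m ↦ Y (m + k + 1) - Y m`, `k ∈ ℕ`,
are null strings, and they are pairwise disjoint: the term of index `m` of the `k`-th string is
killed by exactly `m + k + 2` iterates of `φ`, which determines `m + k`, and `Y` is injective,
which then determines `m`.
-/

open Function

section

variable {G : Type*} [AddCommGroup G] (φ : G →+ G)

theorem map_surjCore : (surjCore φ).map φ = surjCore φ := by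
  rw [surjCore, (AddSubgroup.gc_map_comap φ).l_sSup, sSup_eq_iSup]
  exact iSup_congr fun H => iSup_congr fun hH => SetLike.coe_injective hH

theorem mapsTo_surjCore : Set.MapsTo φ (surjCore φ) (surjCore φ) := fun z hz => by
  rw [← map_surjCore]
  exact AddSubgroup.mem_map_of_mem φ hz

theorem exists_map_succ_eq_of_mem_surjCore {y : G} (hy : y ∈ surjCore φ) :
    ∃ Y : ℕ → G, Y 0 = y ∧ ∀ n, φ (Y (n + 1)) = Y n := by
  have hsurj : ∀ z : surjCore φ, ∃ w : surjCore φ, φ w = z := fun z => by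
    obtain ⟨w, hw, hwz⟩ := AddSubgroup.mem_map.mp ((map_surjCore φ).ge z.2)
    exact ⟨⟨w, hw⟩, hwz⟩
  choose g hg using hsurj
  refine ⟨fun n => g^[n] ⟨y, hy⟩, rfl, fun n => ?_⟩
  simp only [iterate_succ_apply', hg]

theorem mem_surjCore_of_map_succ {x : ℕ → G} (hx : ∀ n, φ (x (n + 1)) = x n) (n : ℕ) :
    x n ∈ surjCore φ := by
  set T := Set.range fun p : ℕ × ℕ => (⇑φ)^[p.1] (x p.2)
  have hT : ⇑φ '' T = T := by
    ext y
    constructor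
    · rintro ⟨_, ⟨⟨j, m⟩, rfl⟩, rfl⟩
      exact ⟨(j + 1, m), iterate_succ_apply' _ _ _⟩
    · rintro ⟨⟨j, m⟩, rfl⟩
      refine ⟨_, ⟨(j, m + 1), rfl⟩, ?_⟩
      dsimp only
      rw [← iterate_succ_apply' φ, iterate_succ_apply, hx]
  have hle : AddSubgroup.closure T ≤ surjCore φ :=
    le_sSup (show ⇑φ '' _ = _ by rw [← AddSubgroup.coe_map, AddMonoidHom.map_closure, hT])
  exact hle (AddSubgroup.subset_closure ⟨(0, n), rfl⟩)

theorem exists_iterate_ne_zero_map_eq_zero {x : G} (hx : x ≠ 0) {n : ℕ} (hn : (⇑φ)^[n] x = 0) :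
    ∃ j, (⇑φ)^[j] x ≠ 0 ∧ φ ((⇑φ)^[j] x) = 0 := by
  induction n generalizing x with
  | zero => exact absurd hn hx
  | succ n ih =>
    by_cases hφx : φ x = 0
    · exact ⟨0, hx, hφx⟩
    · obtain ⟨j, hj⟩ := ih hφx hn
      exact ⟨j + 1, hj⟩

theorem lt_of_iterate_eq_zero_of_iterate_ne_zero {u : G} {a b : ℕ} (ha : (⇑φ)^[a] u = 0)
    (hb : (⇑φ)^[b] u ≠ 0) : b < a := by
  by_contra! hab
  apply hb
  rw [← Nat.sub_add_cancel hab, iterate_add_apply, ha, iterate_map_zero]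

section Chain

variable {φ} {x : ℕ → G} (hx : ∀ n, φ (x (n + 1)) = x n)
include hx

theorem iterate_map_add_eq (m j : ℕ) : (⇑φ)^[j] (x (m + j)) = x m := by
  induction j generalizing m with
  | zero => rfl
  | succ j ih => rw [iterate_succ_apply, ← add_assoc, hx, ih]

theorem iterate_map_self (m : ℕ) : (⇑φ)^[m] (x m) = x 0 := by
  simpa using iterate_map_add_eq hx 0 m

theorem iterate_map_eq_zero (hker : φ (x 0) = 0) (m j : ℕ) : (⇑φ)^[m + j + 1] (x m) = 0 := by
  rw [show m + j + 1 = (j + 1) + m by omega, iterate_add_apply, iterate_map_self hx,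
    iterate_succ_apply, hker, iterate_map_zero]

/-- A backward chain ending at a nonzero `φ`-nilpotent element cannot repeat: a repetition would
make `x 0` a periodic point of `φ`. -/
theorem injective_of_map_succ (h0 : x 0 ≠ 0) {k : ℕ} (hk : (⇑φ)^[k] (x 0) = 0) : Injective x := by
  have hper : ∀ i j, i < j → x i = x j → IsPeriodicPt φ (j - i) (x 0) := fun i j hij h => by
    have := iterate_map_self hx j
    rwa [← h, ← Nat.sub_add_cancel hij.le, iterate_add_apply, iterate_map_self hx] at this
  have hne : ∀ i j, i < j → x i ≠ x j := fun i j hij h => h0 <| by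
    rw [← (hper i j hij h).mul_const k, ← Nat.sub_add_cancel (Nat.le_mul_of_pos_left k
      (Nat.sub_pos_of_lt hij)), iterate_add_apply, hk, iterate_map_zero]
  intro i j h
  rcases lt_trichotomy i j with hij | rfl | hji
  · exact absurd h (hne i j hij)
  · rfl
  · exact absurd h.symm (hne j i hji)

theorem isNullString_of_map_succ (h0 : x 0 ≠ 0) {k : ℕ} (hk : (⇑φ)^[k] (x 0) = 0) :
    IsNullString φ x :=
  ⟨⟨injective_of_map_succ hx h0 hk, hx⟩, h0, k, Nat.pos_of_ne_zero (by rintro rfl; exact h0 hk), hk⟩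

theorem exists_pairwise_disjoint_nullStrings (h0 : x 0 ≠ 0) (hker : φ (x 0) = 0) :
    ∃ S : ℕ → ℕ → G, (∀ k, IsNullString φ (S k)) ∧
      Pairwise fun i j => Disjoint (Set.range (S i)) (Set.range (S j)) := by
  set S : ℕ → ℕ → G := fun k m => x (m + k + 1) - x m
  have hS_chain : ∀ k m, φ (S k (m + 1)) = S k m := fun k m => by
    simp only [S, map_sub, show m + 1 + k + 1 = m + k + 1 + 1 by omega, hx]
  have hS_top : ∀ k m, (⇑φ)^[m + k + 1] (S k m) = x 0 := fun k m => by
    simp only [S, iterate_map_sub]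
    rw [iterate_map_self hx, iterate_map_eq_zero hx hker, sub_zero]
  have hS_zero : ∀ k m, (⇑φ)^[m + k + 2] (S k m) = 0 := fun k m => by
    rw [iterate_succ_apply', hS_top, hker]
  have hS_ne : ∀ k m, (⇑φ)^[m + k + 1] (S k m) ≠ 0 := fun k m => hS_top k m ▸ h0
  have hdepth : ∀ {k m k' m'}, S k m = S k' m' → m + k = m' + k' := fun {k m k' m'} h => by
    have h₁ := lt_of_iterate_eq_zero_of_iterate_ne_zero φ (hS_zero k m) (h ▸ hS_ne k' m')
    have h₂ := lt_of_iterate_eq_zero_of_iterate_ne_zero φ (hS_zero k' m') (h ▸ hS_ne k m)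
    omega
  refine ⟨S, fun k => isNullString_of_map_succ (hS_chain k) ?_ (hS_zero k 0), fun i j hij => Set.disjoint_left.mpr ?_⟩
  · intro h
    exact hS_ne k 0 (by rw [h, iterate_map_zero])
  · rintro _ ⟨m, rfl⟩ ⟨m', h⟩
    have hsum := hdepth h
    have hm : x m' = x m := by
      simp only [S, hsum] at h
      exact sub_right_injective h
    have := injective_of_map_succ hx h0 (k := 1) hker hm
    omega

end Chain

end

theorem theoremAstarstar {G : Type*} [AddCommGroup G] (φ : G →+ G) :
    List.TFAE
      [ (∃ x : ℕ → G, IsNullString (⇑φ) x),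
        (∃ S : ℕ → (ℕ → G), (∀ k : ℕ, IsNullString (⇑φ) (S k)) ∧
          Pairwise fun i j => Disjoint (Set.range (S i)) (Set.range (S j))),
        (∃ x : G, x ≠ 0 ∧ x ∈ surjCore φ ∧ ∃ n : ℕ, (⇑φ)^[n] x = 0) ] := by
  tfae_have 2 → 1 := fun ⟨S, hS, _⟩ => ⟨S 0, hS 0⟩
  tfae_have 1 → 3 := fun ⟨x, ⟨_, hx⟩, hx0, k, _, hk⟩ =>
    ⟨x 0, hx0, mem_surjCore_of_map_succ φ hx 0, k, hk⟩
  tfae_have 3 → 2 := by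
    rintro ⟨x, hx0, hx, n, hn⟩
    obtain ⟨j, hj0, hj⟩ := exists_iterate_ne_zero_map_eq_zero φ hx0 hn
    obtain ⟨Y, hY0, hY⟩ := exists_map_succ_eq_of_mem_surjCore φ ((mapsTo_surjCore φ).iterate j hx)
    exact exists_pairwise_disjoint_nullStrings hY (hY0 ▸ hj0) (hY0 ▸ hj)
  tfae_finish
end

section
/- Proposition (garlands of null strings): Let G be an abelian group, φ an endomorphism of G, and S = (x_n)_{n∈ℕ} a string of φ with x_0 ≠ 0 and φ(x_0) = 0 (so S is a null string). Then for every integer k ≥ 1 the sequence S_k = (x_n + x_{n+k})_{n∈ℕ} is a null string of φ, and the strings S_k, for k ≥ 1, are pairwise disjoint. -/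
def garland {G : Type*} [Add G] (x : ℕ → G) (k : ℕ) : ℕ → G :=
  fun n => x n + x (n + k)

namespace IsString

theorem iterate_apply_add {G : Type*} {f : G → G} {x : ℕ → G} (hx : IsString f x)
    (j n : ℕ) : f^[j] (x (n + j)) = x n := by
  induction j with
  | zero => rfl
  | succ j ih => rw [Function.iterate_succ_apply, ← add_assoc, hx.2, ih]

theorem iterate_apply_self {G : Type*} {f : G → G} {x : ℕ → G} (hx : IsString f x) (n : ℕ) :
    f^[n] (x n) = x 0 := by
  simpa using hx.iterate_apply_add n 0

variable {G : Type*} [AddCommGroup G] {φ : G →+ G} {x : ℕ → G}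

theorem iterate_apply_eq_zero (hx : IsString φ x) (h1 : φ (x 0) = 0) {j n : ℕ} (h : n < j) :
    φ^[j] (x n) = 0 := by
  obtain ⟨m, rfl⟩ := Nat.exists_eq_add_of_lt h
  rw [show n + m + 1 = m + (n + 1) by omega, Function.iterate_add_apply,
    Function.iterate_succ_apply', hx.iterate_apply_self, h1, iterate_map_zero]

theorem eq_of_add_eq_add (hx : IsString φ x) (h0 : x 0 ≠ 0) (h1 : φ (x 0) = 0)
    {a b c d : ℕ} (hab : a < b) (hcd : c < d) (h : x a + x b = x c + x d) :
    a = c ∧ b = d := by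
  wlog hbd : b ≤ d generalizing a b c d
  · exact (this hcd hab h.symm (le_of_not_ge hbd)).imp Eq.symm Eq.symm
  obtain rfl : b = d := by
    by_contra hne
    have h' := congrArg φ^[d] h
    rw [iterate_map_add, iterate_map_add, hx.iterate_apply_eq_zero h1 (hab.trans_le hbd),
      hx.iterate_apply_eq_zero h1 (lt_of_le_of_ne hbd hne), hx.iterate_apply_eq_zero h1 hcd,
      hx.iterate_apply_self, add_zero, zero_add] at h'
    exact h0 h'.symm
  exact ⟨hx.1 (add_right_cancel h), rfl⟩

theorem garland_isString (hx : IsString φ x) (h0 : x 0 ≠ 0) (h1 : φ (x 0) = 0) {k : ℕ}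
    (hk : 1 ≤ k) : IsString φ (garland x k) := by
  refine ⟨fun m n h => (hx.eq_of_add_eq_add h0 h1 (by omega) (by omega) h).1, fun n => ?_⟩
  rw [garland, garland, map_add, hx.2, Nat.add_right_comm, hx.2]

theorem garland_isNullString (hx : IsString φ x) (h0 : x 0 ≠ 0) (h1 : φ (x 0) = 0) {k : ℕ}
    (hk : 1 ≤ k) : IsNullString φ (garland x k) := by
  have hkill : φ^[k] (garland x k 0) = x 0 := by
    rw [garland, iterate_map_add, hx.iterate_apply_eq_zero h1 hk, zero_add,
      hx.iterate_apply_add]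
  refine ⟨hx.garland_isString h0 h1 hk, fun h => h0 ?_, k + 1, k.succ_pos, ?_⟩
  · rw [← hkill, h, iterate_map_zero]
  · rw [Function.iterate_succ_apply', hkill, h1]

theorem disjoint_range_garland (hx : IsString φ x) (h0 : x 0 ≠ 0) (h1 : φ (x 0) = 0)
    {k l : ℕ} (hk : 1 ≤ k) (hl : 1 ≤ l) (hkl : k ≠ l) :
    Disjoint (Set.range (garland x k)) (Set.range (garland x l)) := by
  rw [Set.disjoint_left]
  rintro _ ⟨m, rfl⟩ ⟨n, hn⟩
  have := hx.eq_of_add_eq_add h0 h1 (by omega) (by omega) hn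
  omega

end IsString

theorem garland_of_null_string {G : Type*} [AddCommGroup G] (φ : G →+ G)
    (x : ℕ → G) (hx : IsString (⇑φ) x) (h0 : x 0 ≠ 0) (h1 : φ (x 0) = 0) :
    (∀ k : ℕ, 1 ≤ k → IsNullString (⇑φ) (fun n => x n + x (n + k))) ∧
    (∀ k l : ℕ, 1 ≤ k → 1 ≤ l → k ≠ l →
      Disjoint (Set.range fun n => x n + x (n + k))
        (Set.range fun n => x n + x (n + l))) :=
  ⟨fun _ hk => hx.garland_isNullString h0 h1 hk,
    fun _ _ hk hl hkl => hx.disjoint_range_garland h0 h1 hk hl hkl⟩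
end

section
/- Corollary of Theorem A: Let G be an abelian group and φ a surjective endomorphism of G. Then φ admits no string if and only if every element of G is a periodic point of φ (i.e. G = Per(φ)). -/
/-- A point is periodic if some positive iterate fixes it. -/
def IsPerPt {G : Type*} (f : G → G) (x : G) : Prop :=
  ∃ n : ℕ, 0 < n ∧ f^[n] x = x

/-!
If `x` is not periodic, iterating a right inverse `g` of the surjection `f` from `x` gives a string, since a
repetition `g^[m] x = g^[n] x` with `m < n` would give `f^[n - m] x = x`. Conversely, if every
point is periodic, then for a string `s` with `f^[p] (s 0) = s 0`, the periodic points `s p` and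
`s 0` have the same image under `f^[p]`, which is injective on periodic points; so `s p = s 0`.
-/

open Function Set

section

variable {α : Type*} {f g : α → α} {x : α}

theorem isPerPt_iff_mem_periodicPts : IsPerPt f x ↔ x ∈ periodicPts f := Iff.rfl

theorem injective_iterate_of_notMem_periodicPts (hfg : LeftInverse f g)
    (hx : x ∉ periodicPts f) : Injective fun n ↦ g^[n] x := by
  refine .of_lt_imp_ne fun m n hmn heq ↦ hx ⟨n - m, Nat.sub_pos_of_lt hmn, ?_⟩
  calc f^[n - m] x = f^[n - m] (f^[m] (g^[m] x)) := by rw [(hfg.iterate m) x]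
    _ = f^[n] (g^[n] x) := by rw [← iterate_add_apply, Nat.sub_add_cancel hmn.le, heq]
    _ = x := (hfg.iterate n) x

theorem exists_isString_of_notMem_periodicPts (hf : Surjective f) (hx : x ∉ periodicPts f) :
    ∃ s, IsString f s :=
  ⟨fun n ↦ (surjInv hf)^[n] x,
    injective_iterate_of_notMem_periodicPts (rightInverse_surjInv hf) hx,
    fun n ↦ by simp only [iterate_succ_apply', surjInv_eq]⟩

namespace IsString

variable {s : ℕ → α}

theorem iterate_apply_add_s4 (hs : IsString f s) (n k : ℕ) : f^[k] (s (n + k)) = s n := by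
  induction k with
  | zero => rfl
  | succ k ih => rw [iterate_succ_apply, ← add_assoc, hs.2, ih]

theorem exists_notMem_periodicPts (hs : IsString f s) : ∃ n, s n ∉ periodicPts f := by
  by_contra! hper
  obtain ⟨p, hp, hfix⟩ := hper 0
  have hinj : InjOn f^[p] (periodicPts f) := ((bijOn_periodicPts f).iterate p).injOn
  have hsp : s p = s 0 :=
    hinj (hper p) (hper 0) (by simpa only [zero_add, hfix.eq] using hs.iterate_apply_add_s4 0 p)
  exact hp.ne' (hs.1 hsp)

end IsString

theorem not_exists_isString_iff_periodicPts_eq_univ (hf : Surjective f) :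
    (¬ ∃ s, IsString f s) ↔ periodicPts f = univ := by
  refine ⟨fun hno ↦ eq_univ_of_forall fun x ↦ ?_, fun huniv ⟨s, hs⟩ ↦ ?_⟩
  · by_contra hx
    exact hno (exists_isString_of_notMem_periodicPts hf hx)
  · obtain ⟨n, hn⟩ := hs.exists_notMem_periodicPts
    exact hn (huniv ▸ mem_univ _)

end

theorem corollaryA {G : Type*} [AddCommGroup G] (φ : G →+ G)
    (hsurj : Function.Surjective φ) :
    (¬ ∃ x : ℕ → G, IsString (⇑φ) x) ↔ ∀ x : G, IsPerPt (⇑φ) x := by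
  simp only [isPerPt_iff_mem_periodicPts, ← eq_univ_iff_forall]
  exact not_exists_isString_iff_periodicPts_eq_univ hsurj
end

section
/- Corollary of Theorem A*: Let G be an abelian group and φ a surjective endomorphism of G. Then φ admits no non-singular string if and only if every element of G is a quasi-periodic point of φ (i.e. G = QPer(φ)). -/
/-- A point is quasi-periodic if two distinct iterates agree on it. -/
def IsQPerPt {G : Type*} (f : G → G) (x : G) : Prop :=
  ∃ n m : ℕ, n < m ∧ f^[n] x = f^[m] x

/-- A non-singular string: a string whose first term is not quasi-periodic. -/
def IsNonSingString {G : Type*} (f : G → G) (x : ℕ → G) : Prop :=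
  IsString f x ∧ ¬ IsQPerPt f (x 0)

/-! The backward orbit `n ↦ g^[n] x` of a non-quasi-periodic point `x` along a right inverse `g`
of `f` is a non-singular string: `g^[n] x = g^[m] x` with `n < m` gives, after applying `f^[m]`,
`f^[m - n] x = x`. -/

section BackwardOrbit

variable {α : Type*} {f g : α → α}

theorem IsQPerPt.of_iterate_eq_self {x : α} {k : ℕ} (hk : 0 < k) (h : f^[k] x = x) :
    IsQPerPt f x :=
  ⟨0, k, hk, h.symm⟩

theorem injective_iterate_apply_of_not_isQPerPt (hfg : Function.RightInverse g f) {x : α}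
    (hx : ¬ IsQPerPt f x) : Function.Injective fun n => g^[n] x := by
  refine Function.Injective.of_lt_imp_ne fun n m hnm heq => hx ?_
  refine IsQPerPt.of_iterate_eq_self (k := m - n) (by omega) ?_
  calc f^[m - n] x = f^[m - n] (f^[n] (g^[n] x)) := by rw [(hfg.iterate n) x]
    _ = f^[m] (g^[n] x) := by rw [← Function.iterate_add_apply, Nat.sub_add_cancel hnm.le]
    _ = x := by rw [heq, (hfg.iterate m) x]

theorem isNonSingString_iterate_apply (hfg : Function.RightInverse g f) {x : α}
    (hx : ¬ IsQPerPt f x) : IsNonSingString f fun n => g^[n] x :=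
  ⟨⟨injective_iterate_apply_of_not_isQPerPt hfg hx,
      fun n => by dsimp only; rw [Function.iterate_succ_apply', hfg]⟩, hx⟩

theorem exists_isNonSingString_of_not_isQPerPt (hf : Function.Surjective f) {x : α}
    (hx : ¬ IsQPerPt f x) : ∃ s : ℕ → α, IsNonSingString f s :=
  ⟨_, isNonSingString_iterate_apply (Function.rightInverse_surjInv hf) hx⟩

end BackwardOrbit

theorem corollaryAstar {G : Type*} [AddCommGroup G] (φ : G →+ G)
    (hsurj : Function.Surjective φ) :
    (¬ ∃ x : ℕ → G, IsNonSingString (⇑φ) x) ↔ ∀ x : G, IsQPerPt (⇑φ) x := by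
  constructor
  · intro h x
    by_contra hx
    exact h (exists_isNonSingString_of_not_isQPerPt hsurj hx)
  · rintro h ⟨s, -, hs⟩
    exact hs (h (s 0))
end

section
/- Proposition: Let G be an abelian group and φ an endomorphism of G. If φ admits a singular string, then φ admits a null string. -/
/-- A singular string: a string whose first term is quasi-periodic. -/
def IsSingString {G : Type*} (f : G → G) (x : ℕ → G) : Prop :=
  IsString f x ∧ IsQPerPt f (x 0)

open Function

theorem Function.IsPeriodicPt.eq_of_iterate_eq_of_isFixedPt {α : Type*} {f : α → α} {p k : ℕ}
    {a c : α} (ha : IsPeriodicPt f p a) (hp : 0 < p) (hak : f^[k] a = c) (hc : IsFixedPt f c) :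
    a = c := by
  obtain ⟨q, rfl⟩ := Nat.exists_eq_succ_of_ne_zero hp.ne'
  calc a = f^[(q + 1) * k] a := (ha.mul_const k).eq.symm
    _ = f^[q * k] c := by rw [Nat.succ_mul, iterate_add_apply, hak]
    _ = c := (hc.iterate _).eq

section BackwardOrbit

variable {α : Type*} {f : α → α} {x : ℕ → α}

theorem iterate_apply_add_of_apply_succ (hx : ∀ n, f (x (n + 1)) = x n) (k j : ℕ) :
    f^[k] (x (j + k)) = x j := by
  induction k generalizing j with
  | zero => rfl
  | succ k ih => rw [← add_assoc, iterate_succ_apply, hx, ih]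

theorem injective_of_apply_succ_of_not_isPeriodicPt (hx : ∀ n, f (x (n + 1)) = x n)
    (h₀ : ∀ p, 0 < p → ¬ IsPeriodicPt f p (x 0)) : Injective x := by
  intro i j hij
  wlog hlt : i < j generalizing i j
  · rcases (not_lt.1 hlt).eq_or_lt with h | h
    · exact h.symm
    · exact (this hij.symm h).symm
  have hj : IsPeriodicPt f (j - i) (x j) := by
    show f^[j - i] (x j) = x j
    simpa only [Nat.add_sub_cancel' hlt.le, hij] using iterate_apply_add_of_apply_succ hx (j - i) i
  have h0 : x 0 = f^[j] (x j) := by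
    simpa using (iterate_apply_add_of_apply_succ hx j 0).symm
  exact (h₀ _ (Nat.sub_pos_of_lt hlt) (h0 ▸ hj.apply_iterate j)).elim

end BackwardOrbit

theorem isNullString_of_apply_succ {G : Type*} [AddCommGroup G] {f : G → G} {x : ℕ → G}
    (hf : f 0 = 0) (hx : ∀ n, f (x (n + 1)) = x n) (hx₀ : x 0 ≠ 0) {k : ℕ} (hk : 0 < k)
    (hxk : f^[k] (x 0) = 0) : IsNullString f x :=
  ⟨⟨injective_of_apply_succ_of_not_isPeriodicPt hx fun _ hp hper =>
      hx₀ (hper.eq_of_iterate_eq_of_isFixedPt hp hxk hf), hx⟩, hx₀, k, hk, hxk⟩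

theorem singular_string_gives_null_string {G : Type*} [AddCommGroup G]
    (φ : G →+ G) (h : ∃ x : ℕ → G, IsSingString (⇑φ) x) :
    ∃ y : ℕ → G, IsNullString (⇑φ) y := by
  obtain ⟨x, ⟨hinj, hx⟩, n, m, hnm, hq⟩ := h
  obtain ⟨d, rfl⟩ := Nat.exists_eq_add_of_lt hnm
  refine ⟨fun j => x j - x (j + (d + 1)), isNullString_of_apply_succ (map_zero φ) ?_ ?_
    (Nat.zero_lt_of_lt hnm) ?_⟩
  · intro j
    simp only [map_sub, hx, add_right_comm j 1]
  · exact sub_ne_zero.2 (hinj.ne (by omega))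
  · have hxd : (⇑φ)^[d + 1] (x (d + 1)) = x 0 := by
      simpa using iterate_apply_add_of_apply_succ hx (d + 1) 0
    rw [zero_add, iterate_map_sub, ← hq, add_assoc, iterate_add_apply, hxd, sub_self]
end

section
/- Proposition: Let G be an abelian group and φ an endomorphism of G. If φ is surjective and not injective, then φ admits a null string. -/
section BackwardOrbit

variable {α : Type*} {f : α → α} {x : ℕ → α}

theorem Function.Surjective.exists_backward_orbit (hf : Function.Surjective f) (a : α) :
    ∃ x : ℕ → α, x 0 = a ∧ ∀ n, f (x (n + 1)) = x n :=
  ⟨fun n => Nat.rec a (fun _ y => Function.surjInv hf y) n, rfl,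
    fun _ => Function.surjInv_eq hf _⟩

theorem iterate_apply_of_backward_orbit (hx : ∀ n, f (x (n + 1)) = x n) (k n : ℕ) :
    f^[k] (x (k + n)) = x n := by
  induction k generalizing n with
  | zero => rw [zero_add]; rfl
  | succ k ih => rw [Function.iterate_succ_apply', add_right_comm, add_assoc, ih, hx]

theorem injective_of_backward_orbit {c : α} (hx : ∀ n, f (x (n + 1)) = x n) (hc : f c = c)
    (hx₀ : f (x 0) = c) (hne : x 0 ≠ c) : Function.Injective x := by
  refine .of_lt_imp_ne fun i j hij hxij => hne ?_
  obtain ⟨m, rfl⟩ := Nat.exists_eq_add_of_lt hij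
  have hx_iterate (k : ℕ) : f^[k] (x k) = x 0 := iterate_apply_of_backward_orbit hx k 0
  calc x 0 = f^[i + m + 1] (x (i + m + 1)) := (hx_iterate _).symm
    _ = f^[m] (f (f^[i] (x i))) := by
      rw [← hxij, add_assoc, add_comm, Function.iterate_add_apply, Function.iterate_succ_apply]
    _ = c := by rw [hx_iterate, hx₀, Function.iterate_fixed hc]

theorem Function.Surjective.exists_isString {c a : α} (hf : Function.Surjective f)
    (hc : f c = c) (ha : f a = c) (hne : a ≠ c) : ∃ x, IsString f x ∧ x 0 = a := by
  obtain ⟨x, rfl, hx⟩ := hf.exists_backward_orbit a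
  exact ⟨x, ⟨injective_of_backward_orbit hx hc ha hne, hx⟩, rfl⟩

end BackwardOrbit

theorem surjective_not_injective_gives_null_string {G : Type*} [AddCommGroup G]
    (φ : G →+ G) (hsurj : Function.Surjective φ) (hinj : ¬ Function.Injective φ) :
    ∃ x : ℕ → G, IsNullString (⇑φ) x := by
  obtain ⟨a, hφa, ha⟩ : ∃ a, φ a = 0 ∧ a ≠ 0 := by
    simpa [injective_iff_map_eq_zero] using hinj
  obtain ⟨x, hx, rfl⟩ := hsurj.exists_isString (map_zero φ) hφa ha
  exact ⟨x, hx, ha, 1, one_pos, hφa⟩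
end

section
/- Lemma: Let Γ be a set, λ : Γ → Γ a self-map, and S = (x_n)_{n∈ℕ} a pseudostring of λ whose set of terms {x_n : n ∈ ℕ} is infinite. Then there exists m ∈ ℕ such that the shifted sequence (x_{n+m})_{n∈ℕ} is a string of λ. Moreover, if λ is injective, then S itself is a string. -/
open Function Set

theorem Function.IsPeriodicPt.finite_range_iterate {α : Type*} {f : α → α} {n : ℕ} {x : α}
    (h : IsPeriodicPt f n x) (hn : 0 < n) : (range fun m => f^[m] x).Finite :=
  ((finite_Iio n).image fun m => f^[m] x).subset <| by
    rintro _ ⟨m, rfl⟩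
    exact ⟨m % n, Nat.mod_lt m hn, h.iterate_mod_apply m⟩

def IsPseudostring {G : Type*} (f : G → G) (x : ℕ → G) : Prop :=
  ∀ n : ℕ, f (x (n + 1)) = x n

namespace IsPseudostring

variable {G : Type*} {f : G → G} {x : ℕ → G}

theorem iterate_apply_add (hx : IsPseudostring f x) (k n : ℕ) : f^[k] (x (n + k)) = x n := by
  induction k with
  | zero => rfl
  | succ k ih => rw [← add_assoc, iterate_succ_apply, hx, ih]

theorem shift (hx : IsPseudostring f x) (m : ℕ) : IsPseudostring f fun n => x (n + m) := by
  intro n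
  simpa only [add_right_comm n 1 m] using hx (n + m)

theorem eq_of_apply_add_eq (hx : IsPseudostring f x) {i j k : ℕ} (h : x (i + k) = x (j + k)) :
    x i = x j := by
  rw [← hx.iterate_apply_add k i, ← hx.iterate_apply_add k j, h]

theorem apply_add_eq_of_eq (hx : IsPseudostring f x) (hf : Injective f) {i j : ℕ} (h : x i = x j)
    (k : ℕ) : x (i + k) = x (j + k) :=
  hf.iterate k <| by rw [hx.iterate_apply_add, hx.iterate_apply_add, h]

theorem injective_shift_of_forall_ne (hx : IsPseudostring f x) {m : ℕ}
    (hm : ∀ j, m < j → x j ≠ x m) : Injective fun n => x (n + m) := by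
  refine .of_lt_imp_ne fun a b hab heq => ?_
  obtain ⟨d, rfl⟩ := Nat.exists_eq_add_of_lt hab
  have hrecur : x m = x (m + d + 1) := hx.eq_of_apply_add_eq (k := a) (by convert heq using 2 <;> omega)
  exact hm _ (by omega) hrecur.symm

theorem finite_range_of_forall_exists_eq (hx : IsPseudostring f x)
    (hrec : ∀ m, ∃ j, m < j ∧ x j = x m) : (range x).Finite := by
  obtain ⟨p, hp, hxp⟩ := hrec 0
  have hper : IsPeriodicPt f p (x 0) := by
    have := hx.iterate_apply_add p 0
    rwa [zero_add, hxp] at this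
  have hlate : ∀ n, ∃ k, n ≤ k ∧ x k = x 0 := by
    intro n
    induction n with
    | zero => exact ⟨0, le_rfl, rfl⟩
    | succ n ih =>
      obtain ⟨k, hk, hxk⟩ := ih
      obtain ⟨j, hj, hxj⟩ := hrec k
      exact ⟨j, hk.trans_lt hj, hxj.trans hxk⟩
  refine (hper.finite_range_iterate hp).subset ?_
  rintro _ ⟨n, rfl⟩
  obtain ⟨k, hk, hxk⟩ := hlate n
  refine ⟨k - n, ?_⟩
  simpa only [Nat.add_sub_cancel' hk, hxk] using hx.iterate_apply_add (k - n) n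

theorem exists_isString_shift (hx : IsPseudostring f x) (hinf : (range x).Infinite) :
    ∃ m, IsString f fun n => x (n + m) := by
  by_cases h : ∃ m, ∀ j, m < j → x j ≠ x m
  · obtain ⟨m, hm⟩ := h
    exact ⟨m, hx.injective_shift_of_forall_ne hm, hx.shift m⟩
  · push Not at h
    exact absurd (hx.finite_range_of_forall_exists_eq h) hinf

end IsPseudostring

theorem infinite_pseudostring_contains_string {Γ : Type*} (f : Γ → Γ)
    (x : ℕ → Γ) (hps : ∀ n : ℕ, f (x (n + 1)) = x n)
    (hinf : (Set.range x).Infinite) :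
    (∃ m : ℕ, IsString f fun n => x (n + m)) ∧
    (Function.Injective f → IsString f x) := by
  have hx : IsPseudostring f x := hps
  refine ⟨hx.exists_isString_shift hinf, fun hf => ⟨fun a b hab => ?_, hps⟩⟩
  obtain ⟨m, hinj, -⟩ := hx.exists_isString_shift hinf
  exact hinj (hx.apply_add_eq_of_eq hf hab m)
end

section
/- Proposition: Let G be an abelian group, φ an injective endomorphism of G, and S = (x_n)_{n∈ℕ} a string of φ. Then at least one of the following holds: (i) the garland sequences S_k = (x_n + x_{n+k})_{n∈ℕ}, for integers k ≥ 1, are pairwise disjoint strings of φ; or (ii) there exists a sequence (a_k)_{k∈ℕ} of pairwise distinct natural numbers such that the sequences a_k·S = (a_k x_n)_{n∈ℕ} are pairwise disjoint strings of φ. -/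
/-!
A coincidence between two garland terms, x_i + x_{i+p} = x_j + x_{j+r}, propagates along the
whole string because φ is injective, giving a recurrence x_n + x_{n+p} = x_{n+d} + x_{n+d+r}
in which one index is strictly largest. Hence all x_n lie in a finitely generated subgroup T,
whose e-torsion is finite for e ≠ 0. Since an identity e·x_i = e·x_{i+t} or e·x_i = 0 spreads
to all indices, e·S is a string and e·x_0 ≠ 0. If a·x_{j+d} = b·x_j for distinct primes a, b,
then a^s·x_{sd} = b^s·x_0, so by Bezout x_0 is divisible by every a^s in T; Krull's
intersection theorem then gives (1 - ac)·x_0 = 0, a contradiction. So the multiples of S by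
the primes form the fan.
-/

open Submodule Set Function

def IsBackwardOrbit {G : Type*} (f : G → G) (x : ℕ → G) : Prop :=
  ∀ n, f (x (n + 1)) = x n

theorem IsString.isBackwardOrbit {G : Type*} {f : G → G} {x : ℕ → G} (hx : IsString f x) :
    IsBackwardOrbit f x :=
  hx.2

namespace IsBackwardOrbit

section Map

variable {G : Type*} {f : G → G} {x : ℕ → G}

theorem iterate (hx : IsBackwardOrbit f x) (n k : ℕ) : f^[k] (x (n + k)) = x n := by
  induction k with
  | zero => rfl
  | succ k ih => rw [iterate_succ_apply, ← add_assoc, hx, ih]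

theorem shift (hx : IsBackwardOrbit f x) (k : ℕ) : IsBackwardOrbit f (fun n => x (n + k)) :=
  fun n => show f (x (n + 1 + k)) = x (n + k) by rw [add_right_comm, hx]

end Map

variable {G : Type*} [AddCommGroup G] {φ : G →+ G} {x y : ℕ → G}

theorem add (hx : IsBackwardOrbit φ x) (hy : IsBackwardOrbit φ y) :
    IsBackwardOrbit φ (fun n => x n + y n) :=
  fun n => by rw [map_add, hx, hy]

theorem sub (hx : IsBackwardOrbit φ x) (hy : IsBackwardOrbit φ y) :
    IsBackwardOrbit φ (fun n => x n - y n) :=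
  fun n => by rw [map_sub, hx, hy]

theorem zsmul (hx : IsBackwardOrbit φ x) (e : ℤ) : IsBackwardOrbit φ (fun n => e • x n) :=
  fun n => by rw [map_zsmul, hx]

theorem eq_zero_of_apply_eq_zero (hφ : Injective φ) (hx : IsBackwardOrbit φ x) {i : ℕ}
    (hi : x i = 0) (n : ℕ) : x n = 0 := by
  have h : φ^[n] (x (i + n)) = φ^[n] 0 := by rw [hx.iterate, hi, iterate_map_zero]
  have hni : x (n + i) = 0 := by rw [add_comm]; exact hφ.iterate n h
  rw [← hx.iterate n i, hni, iterate_map_zero]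

theorem eq_of_apply_eq (hφ : Injective φ) (hx : IsBackwardOrbit φ x) (hy : IsBackwardOrbit φ y)
    {i : ℕ} (hi : x i = y i) : x = y :=
  funext fun n => sub_eq_zero.mp <| (hx.sub hy).eq_zero_of_apply_eq_zero hφ (sub_eq_zero.mpr hi) n

end IsBackwardOrbit

theorem Submodule.span_range_fg_of_recurrence {R M : Type*} [Semiring R] [AddCommMonoid M]
    [Module R M] {x : ℕ → M} (N : ℕ) (h : ∀ n, x (n + N) ∈ span R (x '' Ico n (n + N))) :
    (span R (range x)).FG := by
  have hmem : ∀ n, x n ∈ span R (x '' Iio N) := by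
    intro n
    induction n using Nat.strong_induction_on with
    | _ n ih =>
      by_cases hn : n < N
      · exact subset_span (mem_image_of_mem x hn)
      · obtain ⟨m, rfl⟩ := Nat.exists_eq_add_of_le' (not_lt.mp hn)
        refine span_le.mpr ?_ (h m)
        rintro _ ⟨i, hi, rfl⟩
        exact ih i (mem_Ico.mp hi).2
  have : span R (range x) = span R (x '' Iio N) :=
    le_antisymm (span_le.mpr (range_subset_iff.mpr hmem)) (span_mono (image_subset_range x _))
  exact this ▸ fg_span ((finite_Iio N).image x)

section Garland

variable {G : Type*} [AddCommGroup G] {φ : G →+ G} {x : ℕ → G}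

theorem garland_of_sums_injective (hx : IsBackwardOrbit φ x)
    (h : ∀ i j p r, 1 ≤ p → 1 ≤ r →
      x i + x (i + p) = x j + x (j + r) → i = j ∧ p = r) :
    (∀ k : ℕ, 1 ≤ k → IsString (⇑φ) (fun n => x n + x (n + k))) ∧
      ∀ k l : ℕ, 1 ≤ k → 1 ≤ l → k ≠ l →
        Disjoint (range fun n => x n + x (n + k)) (range fun n => x n + x (n + l)) := by
  refine ⟨fun k hk => ⟨fun n m hnm => (h n m k k hk hk hnm).1, hx.add (hx.shift k)⟩,
    fun k l hk hl hkl => disjoint_left.mpr ?_⟩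
  rintro _ ⟨n, rfl⟩ ⟨m, hm⟩
  exact hkl (h n m k l hk hl hm.symm).2

theorem exists_relation_of_coincidence (hφ : Injective φ) (hx : IsString φ x)
    {i j p r : ℕ} (hp : 1 ≤ p) (hr : 1 ≤ r) (heq : x i + x (i + p) = x j + x (j + r))
    (hne : i = j → p ≠ r) :
    ∃ d p' r' : ℕ, d ≠ 0 ∧ 1 ≤ r' ∧
      ∀ n, x n + x (n + p') = x (n + d) + x (n + (d + r')) := by
  wlog hij : i ≤ j generalizing i j p r
  · exact this hr hp heq.symm (fun h => (hne h.symm).symm) (le_of_not_ge hij)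
  obtain ⟨d, rfl⟩ := Nat.exists_eq_add_of_le hij
  have hd : d ≠ 0 := by
    rintro rfl
    exact hne rfl (add_left_cancel (hx.1 (add_left_cancel heq)))
  have hx' := hx.isBackwardOrbit
  refine ⟨d, p, r, hd, hr, congrFun (IsBackwardOrbit.eq_of_apply_eq hφ (hx'.add (hx'.shift p))
    ((hx'.shift d).add (hx'.shift (d + r))) (i := i) ?_)⟩
  simpa only [add_assoc] using heq

theorem fg_span_range_of_relation (hx : Injective x) {d p r : ℕ} (hd : d ≠ 0) (hr : 1 ≤ r)
    (hrel : ∀ n, x n + x (n + p) = x (n + d) + x (n + (d + r))) :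
    (span ℤ (range x)).FG := by
  have hpdr : p ≠ d + r := by
    rintro rfl
    have := hx (add_right_cancel (hrel 0))
    omega
  rcases lt_or_gt_of_ne hpdr with hlt | hgt
  · refine span_range_fg_of_recurrence (d + r) fun n => ?_
    have mem : ∀ k < d + r, x (n + k) ∈ span ℤ (x '' Ico n (n + (d + r))) := fun k hk =>
      subset_span (mem_image_of_mem x (mem_Ico.mpr ⟨by omega, by omega⟩))
    rw [show x (n + (d + r)) = x (n + 0) + x (n + p) - x (n + d) by rw [add_zero, hrel n]; abel]
    exact sub_mem (add_mem (mem 0 (by omega)) (mem p hlt)) (mem d (by omega))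
  · refine span_range_fg_of_recurrence p fun n => ?_
    have mem : ∀ k < p, x (n + k) ∈ span ℤ (x '' Ico n (n + p)) := fun k hk =>
      subset_span (mem_image_of_mem x (mem_Ico.mpr ⟨by omega, by omega⟩))
    rw [show x (n + p) = x (n + d) + x (n + (d + r)) - x (n + 0) by rw [add_zero, ← hrel n]; abel]
    exact sub_mem (add_mem (mem d (by omega)) (mem (d + r) hgt)) (mem 0 (by omega))

end Garland

theorem finite_setOf_zsmul_eq_zero {M : Type*} [AddCommGroup M] [Module.Finite ℤ M] {e : ℤ}
    (he : e ≠ 0) : {m : M | e • m = 0}.Finite := by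
  have : Module.IsTorsion ℤ (torsionBy ℤ M e) :=
    fun m => ⟨⟨e, mem_nonZeroDivisors_of_ne_zero he⟩, smul_torsionBy e m⟩
  have := Module.finite_of_fg_torsion _ this
  exact Set.toFinite (torsionBy ℤ M e : Set M)

theorem Submodule.FG.finite_setOf_zsmul_eq_zero {G : Type*} [AddCommGroup G] {T : Submodule ℤ G}
    (hT : T.FG) {e : ℤ} (he : e ≠ 0) : {g ∈ T | e • g = 0}.Finite := by
  have := Module.Finite.iff_fg.mpr hT
  refine ((_root_.finite_setOf_zsmul_eq_zero (M := T) he).image Subtype.val).subset ?_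
  rintro g ⟨hgT, hg⟩
  exact ⟨⟨g, hgT⟩, Subtype.ext hg, rfl⟩

theorem Submodule.FG.exists_mul_zsmul_eq_self {G : Type*} [AddCommGroup G] {T : Submodule ℤ G}
    (hT : T.FG) {a : ℤ} {g : G} (hg : g ∈ T)
    (hdiv : ∀ s : ℕ, ∃ w ∈ T, a ^ s • w = g) :
    ∃ c : ℤ, (a * c) • g = g := by
  have := Module.Finite.iff_fg.mpr hT
  have h : (⟨g, hg⟩ : T) ∈ (⨅ s : ℕ, Ideal.span {a} ^ s • ⊤ : Submodule ℤ T) := by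
    refine mem_iInf _ |>.mpr fun s => ?_
    obtain ⟨w, hwT, hw⟩ := hdiv s
    rw [Ideal.span_singleton_pow, ideal_span_singleton_smul]
    exact (mem_smul_pointwise_iff_exists _ _ _).mpr ⟨⟨w, hwT⟩, mem_top, Subtype.ext hw⟩
  obtain ⟨⟨r, hr⟩, hrg⟩ := (Ideal.span {a}).mem_iInf_smul_pow_eq_bot_iff _ |>.mp h
  obtain ⟨c, rfl⟩ := Ideal.mem_span_singleton'.mp hr
  exact ⟨c, by rw [mul_comm]; exact congrArg Subtype.val hrg⟩

theorem Submodule.FG.not_injective_of_zsmul_eq_zero {G : Type*} [AddCommGroup G]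
    {T : Submodule ℤ G} (hT : T.FG) {e : ℤ} (he : e ≠ 0) {y : ℕ → G}
    (hyT : ∀ n, y n ∈ T)
    (hy : ∀ n, e • y n = 0) : ¬Injective y := fun hinj =>
  infinite_range_of_injective hinj <|
    (hT.finite_setOf_zsmul_eq_zero he).subset (range_subset_iff.mpr fun n => ⟨hyT n, hy n⟩)

namespace IsString

variable {G : Type*} [AddCommGroup G] {φ : G →+ G} {x : ℕ → G}

theorem zsmul_ne_zero (hφ : Injective φ) (hx : IsString φ x) (hT : (span ℤ (range x)).FG)
    {e : ℤ} (he : e ≠ 0) (n : ℕ) : e • x n ≠ 0 := fun hn =>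
  hT.not_injective_of_zsmul_eq_zero he (fun m => subset_span (mem_range_self m))
    ((hx.isBackwardOrbit.zsmul e).eq_zero_of_apply_eq_zero hφ hn) hx.1

theorem zsmul (hφ : Injective φ) (hx : IsString φ x) (hT : (span ℤ (range x)).FG)
    {e : ℤ} (he : e ≠ 0) : IsString φ (fun n => e • x n) := by
  refine ⟨fun n m hnm => ?_, hx.isBackwardOrbit.zsmul e⟩
  wlog hle : n ≤ m generalizing n m
  · exact (this m n hnm.symm (le_of_not_ge hle)).symm
  obtain ⟨t, rfl⟩ := Nat.exists_eq_add_of_le hle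
  by_contra ht
  have hper : (fun i => e • x (i + t)) = fun i => e • x i :=
    IsBackwardOrbit.eq_of_apply_eq hφ ((hx.isBackwardOrbit.shift t).zsmul e)
      (hx.isBackwardOrbit.zsmul e) hnm.symm
  have hmul : ∀ j, e • x (j * t) = e • x 0 := by
    intro j
    induction j with
    | zero => rw [zero_mul]
    | succ j ih => rw [Nat.succ_mul, congrFun hper, ih]
  refine hT.not_injective_of_zsmul_eq_zero he (y := fun j => x (j * t) - x 0)
    (fun j => sub_mem (subset_span (mem_range_self _)) (subset_span (mem_range_self _)))
    (fun j => by rw [smul_sub, hmul, sub_self]) fun j j' h => ?_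
  exact Nat.eq_of_mul_eq_mul_right (by omega) (hx.1 (sub_left_injective h))

theorem zsmul_shift_ne (hφ : Injective φ) (hx : IsString φ x) (hT : (span ℤ (range x)).FG)
    {a b : ℤ} (hab : IsCoprime a b) (ha : ¬IsUnit a) (d : ℕ) :
    (fun j => a • x (j + d)) ≠ fun j => b • x j := by
  intro h
  have hpow : ∀ s, a ^ s • x (s * d) = b ^ s • x 0 := by
    intro s
    induction s with
    | zero => simp
    | succ s ih =>
      calc a ^ (s + 1) • x ((s + 1) * d) = a ^ s • a • x (s * d + d) := by
            rw [pow_succ, mul_smul, Nat.succ_mul]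
        _ = b ^ (s + 1) • x 0 := by rw [congrFun h, smul_comm, ih, pow_succ', mul_smul]
  have hdiv : ∀ s : ℕ, ∃ w ∈ span ℤ (range x), a ^ s • w = x 0 := by
    intro s
    obtain ⟨α, β, hαβ⟩ := hab.pow (m := s) (n := s)
    refine ⟨α • x 0 + β • x (s * d), add_mem (smul_mem _ _ (subset_span (mem_range_self _)))
      (smul_mem _ _ (subset_span (mem_range_self _))), ?_⟩
    calc a ^ s • (α • x 0 + β • x (s * d)) = (α * a ^ s + β * b ^ s) • x 0 := by
          rw [smul_add, smul_comm, smul_comm _ β, hpow, add_smul, mul_smul, mul_smul]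
      _ = x 0 := by rw [hαβ, one_smul]
  obtain ⟨c, hc⟩ := hT.exists_mul_zsmul_eq_self (subset_span (mem_range_self 0)) hdiv
  refine hx.zsmul_ne_zero hφ hT (e := 1 - a * c) (fun h1 => ha ?_) 0
    (by rw [sub_smul, one_smul, hc, sub_self])
  exact IsUnit.of_mul_eq_one c (sub_eq_zero.mp h1).symm

theorem disjoint_range_zsmul (hφ : Injective φ) (hx : IsString φ x)
    (hT : (span ℤ (range x)).FG) {a b : ℤ} (hab : IsCoprime a b) (ha : ¬IsUnit a)
    (hb : ¬IsUnit b) : Disjoint (range fun n => a • x n) (range fun n => b • x n) := by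
  rw [disjoint_left]
  rintro _ ⟨n, rfl⟩ ⟨m, hm⟩
  wlog hmn : m ≤ n generalizing a b n m
  · exact this hab.symm hb ha m n hm.symm (le_of_not_ge hmn)
  obtain ⟨d, rfl⟩ := Nat.exists_eq_add_of_le hmn
  refine hx.zsmul_shift_ne hφ hT hab ha d (IsBackwardOrbit.eq_of_apply_eq hφ
    ((hx.isBackwardOrbit.shift d).zsmul a) (hx.isBackwardOrbit.zsmul b) (i := m) ?_)
  simpa only [add_comm d] using hm.symm

end IsString

theorem exists_fan_of_fg {G : Type*} [AddCommGroup G] {φ : G →+ G} {x : ℕ → G}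
    (hφ : Injective φ) (hx : IsString φ x) (hT : (span ℤ (range x)).FG) :
    ∃ a : ℕ → ℕ, Injective a ∧ (∀ k, IsString φ (fun n => a k • x n)) ∧
      Pairwise fun k l => Disjoint (range fun n => a k • x n) (range fun n => a l • x n) := by
  have hprime (k : ℕ) : Prime (Nat.nth Nat.Prime k : ℤ) :=
    Nat.prime_iff_prime_int.mp (Nat.prime_nth_prime k)
  simp only [← natCast_zsmul]
  refine ⟨Nat.nth Nat.Prime, Nat.nth_injective Nat.infinite_setOfPred_prime,
    fun k => hx.zsmul hφ hT (hprime k).ne_zero, fun k l hkl => ?_⟩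
  refine hx.disjoint_range_zsmul hφ hT ?_ (hprime k).not_isUnit (hprime l).not_isUnit
  exact Nat.isCoprime_iff_coprime.mpr <| (Nat.coprime_primes (Nat.prime_nth_prime k)
    (Nat.prime_nth_prime l)).mpr ((Nat.nth_injective Nat.infinite_setOfPred_prime).ne hkl)

theorem garland_or_fan {G : Type*} [AddCommGroup G] (φ : G →+ G)
    (hφ : Function.Injective φ) (x : ℕ → G) (hx : IsString (⇑φ) x) :
    ((∀ k : ℕ, 1 ≤ k → IsString (⇑φ) (fun n => x n + x (n + k))) ∧
      (∀ k l : ℕ, 1 ≤ k → 1 ≤ l → k ≠ l →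
        Disjoint (Set.range fun n => x n + x (n + k))
          (Set.range fun n => x n + x (n + l)))) ∨
    (∃ a : ℕ → ℕ, Function.Injective a ∧
      (∀ k : ℕ, IsString (⇑φ) (fun n => a k • x n)) ∧
      Pairwise fun k l =>
        Disjoint (Set.range fun n => a k • x n) (Set.range fun n => a l • x n)) := by
  by_cases h : ∀ i j p r, 1 ≤ p → 1 ≤ r →
      x i + x (i + p) = x j + x (j + r) → i = j ∧ p = r
  · exact Or.inl (garland_of_sums_injective hx.isBackwardOrbit h)
  · push Not at h
    obtain ⟨i, j, p, r, hp, hr, heq, hne⟩ := h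
    obtain ⟨d, p', r', hd, hr', hrel⟩ := exists_relation_of_coincidence hφ hx hp hr heq hne
    exact Or.inr (exists_fan_of_fg hφ hx (fg_span_range_of_relation hx.1 hd hr' hrel))
end
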